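/- arXiv:2103.00641 — 3 statements merged into one kernel-verified Lean document; each statement's English description precedes it below -/
import Mathlib

section
/- Let L be a field, let s ≥ 2, and let f_1, ..., f_s ∈ L[x] be relatively prime polynomials (i.e., their greatest common divisor is 1) of degree at most D. Then there exist polynomials b_1, ..., b_s ∈ L[x] of degree at most D such that b_1·f_1 + ... + b_s·f_s = 1. -/
/-!
Since `L[X]` is a principal ideal domain, relatively prime `fᵢ` admit some Bézout identity
`∑ aᵢ fᵢ = 1`; pick `j` with `fⱼ ≠ 0`. Replacing each `aᵢ` (`i ≠ j`) by its remainder modulo `fⱼ`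
and absorbing all quotients into the `j`-th coefficient keeps the identity and gives
`deg bᵢ < deg fⱼ ≤ D` for `i ≠ j`. Then `bⱼ fⱼ = 1 - ∑_{i ≠ j} bᵢ fᵢ` has degree at most
`deg fⱼ + D`, hence `deg bⱼ ≤ D`.
-/

open Polynomial

theorem exists_sum_mul_eq_one_of_forall_dvd_isUnit {R ι : Type*} [CommRing R]
    [IsPrincipalIdealRing R] [Fintype ι] (f : ι → R)
    (hf : ∀ d : R, (∀ i, d ∣ f i) → IsUnit d) : ∃ b : ι → R, ∑ i, b i * f i = 1 := by
  set I := Ideal.span (Set.range f)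
  have hgen : IsUnit (Submodule.IsPrincipal.generator I) := hf _ fun i ↦
    (Submodule.IsPrincipal.mem_iff_generator_dvd I).mp (Ideal.subset_span ⟨i, rfl⟩)
  have hI : (1 : R) ∈ I :=
    I.eq_top_of_isUnit_mem (Submodule.IsPrincipal.generator_mem I) hgen ▸ trivial
  simpa using (Submodule.mem_span_range_iff_exists_fun R).mp hI

namespace Polynomial

theorem exists_sum_mul_eq_with_degree_lt {K ι : Type*} [Field K] [Fintype ι] [DecidableEq ι]
    {f a : ι → K[X]} {g : K[X]} (ha : ∑ i, a i * f i = g) {j : ι} (hj : f j ≠ 0) :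
    ∃ b : ι → K[X], ∑ i, b i * f i = g ∧ ∀ i ≠ j, (b i).degree < (f j).degree := by
  refine ⟨fun i ↦ a i % f j + if i = j then ∑ k, a k / f j * f k else 0, ?_, fun i hi ↦ ?_⟩
  · rw [← ha]
    simp only [add_mul, Finset.sum_add_distrib, ite_mul, zero_mul, Finset.sum_ite_eq',
      Finset.mem_univ, if_true, Finset.sum_mul]
    rw [← Finset.sum_add_distrib]
    refine Finset.sum_congr rfl fun i _ ↦ ?_
    conv_rhs => rw [← EuclideanDomain.mod_add_div (a i) (f j)]
    ring
  · simpa [hi] using degree_mod_lt (a i) hj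

theorem natDegree_le_of_sum_eq_one {R ι : Type*} [CommRing R] [Fintype ι] [DecidableEq ι]
    {g : ι → R[X]} (hg : ∑ i, g i = 1) {j : ι} {N : ℕ} (hN : ∀ i ≠ j, (g i).natDegree ≤ N) :
    (g j).natDegree ≤ N := by
  have hgj : g j = 1 - ∑ i ∈ Finset.univ.erase j, g i := by
    rw [← hg, ← Finset.add_sum_erase _ _ (Finset.mem_univ j)]
    ring
  rw [hgj]
  refine (natDegree_sub_le _ _).trans (max_le (by simp) ?_)
  exact natDegree_sum_le_of_forall_le _ _ fun i hi ↦ hN i (Finset.ne_of_mem_erase hi)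

end Polynomial

theorem bezout_degree_bound_general
    {L : Type*} [Field L] (s D : ℕ)
    (f : Fin s → Polynomial L) (hdeg : ∀ i, (f i).natDegree ≤ D)
    (hcop : ∀ d : Polynomial L, (∀ i, d ∣ f i) → IsUnit d) :
    ∃ b : Fin s → Polynomial L, (∀ i, (b i).natDegree ≤ D) ∧ ∑ i, b i * f i = 1 := by
  obtain ⟨a, ha⟩ := exists_sum_mul_eq_one_of_forall_dvd_isUnit f hcop
  obtain ⟨j, -, hj⟩ := Finset.exists_ne_zero_of_sum_ne_zero (ha ▸ one_ne_zero)
  have hfj : f j ≠ 0 := right_ne_zero_of_mul hj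
  obtain ⟨b, hb, hb_lt⟩ := exists_sum_mul_eq_with_degree_lt ha hfj
  have hb_le : ∀ i ≠ j, (b i).natDegree ≤ (f j).natDegree :=
    fun i hi ↦ natDegree_le_natDegree (hb_lt i hi).le
  refine ⟨b, fun i ↦ ?_, hb⟩
  rcases eq_or_ne i j with rfl | hi
  · have hbf : (b i * f i).natDegree ≤ (f i).natDegree + D :=
      natDegree_le_of_sum_eq_one hb fun k hk ↦
        natDegree_mul_le.trans (add_le_add (hb_le k hk) (hdeg k))
    rcases eq_or_ne (b i) 0 with h0 | h0
    · simp [h0]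
    · rw [natDegree_mul h0 hfj] at hbf
      omega
  · exact (hb_le i hi).trans (hdeg j)

/-- Bézout identity with degree bounds: if `f 0, ..., f (s-1)` are relatively prime
polynomials (every common divisor is a unit) of degree at most `D` over a field `L`,
then there are polynomials `b i` of degree at most `D` with `Σ b i · f i = 1`. -/
theorem bezout_degree_bound
    {L : Type*} [Field L] (s D : ℕ) (hs : 2 ≤ s)
    (f : Fin s → Polynomial L) (hdeg : ∀ i, (f i).natDegree ≤ D)
    (hcop : ∀ d : Polynomial L, (∀ i, d ∣ f i) → IsUnit d) :
    ∃ b : Fin s → Polynomial L, (∀ i, (b i).natDegree ≤ D) ∧ ∑ i, b i * f i = 1 :=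
  bezout_degree_bound_general s D f hdeg hcop
end

section
/- Let q be a power of a prime, let s ≥ 2, and let f_1, ..., f_s ∈ F_q[t][x] be polynomials of degree at most D in x and of heights at most H, not all zero. Assume that the polynomials f_1(x), ..., f_s(x) have at most N_0 common zeros in the algebraic closure of F_q(t). Then there exists a nonzero polynomial 𝒯 ∈ F_q[t] of degree at most (2D+1)H with the property that for each τ in the algebraic closure of F_q with 𝒯(τ) ≠ 0, the specialized polynomials f_1(τ; x), ..., f_s(τ; x), obtained by applying the evaluation t ↦ τ to each coefficient, have at most N_0 common zeros in the algebraic closure of F_q. -/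
open Polynomial

/-- The height of a polynomial `f ∈ F_q[t][x]`: the maximum of the `t`-degrees of its
coefficients. -/
noncomputable def polyHeight {Fq : Type*} [Field Fq] (f : Polynomial (Polynomial Fq)) : ℕ :=
  f.support.sup fun i => (f.coeff i).natDegree

/-!
Fix `f i₀ ≠ 0` and let `π` run over its distinct prime factors in `F_q[t][x]`. Either `π`
divides every `f i`, or `π ∤ f j` for some `j`; then `π` and `f j` are coprime over `F_q(t)`,
so their resultant `r_π ∈ F_q[t]` is nonzero and lies in the ideal `(π, f j)`. Put
`𝒯 = ∏ lc(π) · ∏ r_π`. Since `∏ π ∣ f i₀`, the degrees and heights of the `π` add up to at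
most `D` and `H`, and the resultant bound `deg r_π ≤ deg π · H + D · ht π` gives
`deg 𝒯 ≤ H + 2DH`.

If `𝒯(τ) ≠ 0`, a common zero of the specialized `f i` is a root of some specialized `π`, and
`r_π(τ) ≠ 0` forces `π` to divide every `f i`. Writing `π = σ(x^(p^m))` with `σ` separable
over `F_q(t)`, the specialized `π` has at most `deg σ` distinct roots, which is the number of
distinct roots of `π` over the algebraic closure of `F_q(t)`. These root sets are disjoint
(the `π` are coprime) and consist of common zeros of the `f i`, so they add up to at most `N₀`.
-/

open UniqueFactorizationMonoid

theorem Polynomial.Bivariate.coeff_coeff_swap {R : Type*} [CommSemiring R] (p : R[X][X])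
    (i j : ℕ) : ((Bivariate.swap p).coeff j).coeff i = (p.coeff i).coeff j := by
  induction p using Polynomial.induction_on' with
  | add p q hp hq => simp only [map_add, coeff_add, hp, hq]
  | monomial n a =>
    induction a using Polynomial.induction_on' with
    | add a b ha hb => simp only [(monomial n).map_add, map_add, coeff_add, ha, hb]
    | monomial m r =>
      rw [Bivariate.swap_monomial_monomial]
      simp only [coeff_monomial]
      split_ifs <;> simp [coeff_monomial, *]

theorem Matrix.natDegree_det_le_sum {R ι : Type*} [CommRing R] [Fintype ι] [DecidableEq ι]
    (A : Matrix ι ι R[X]) (d : ι → ℕ) (h : ∀ i j, (A i j).natDegree ≤ d j) :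
    A.det.natDegree ≤ ∑ j, d j := by
  rw [Matrix.det_apply]
  refine natDegree_sum_le_of_forall_le _ _ fun σ _ => ?_
  rcases Int.units_eq_one_or (Equiv.Perm.sign σ) with hσ | hσ <;>
    simp only [hσ, one_smul, Units.neg_smul, natDegree_neg] <;>
    exact (natDegree_prod_le _ _).trans (Finset.sum_le_sum fun j _ => h (σ j) j)

theorem UniqueFactorizationMonoid.exists_mem_primeFactors_apply_eq_zero {M S F : Type*}
    [CommMonoidWithZero M] [NormalizationMonoid M] [UniqueFactorizationMonoid M]
    [CommMonoidWithZero S] [NoZeroDivisors S] [Nontrivial S] [FunLike F M S]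
    [MonoidWithZeroHomClass F M S] (Φ : F) {a : M} (ha : a ≠ 0) (h : Φ a = 0) :
    ∃ p ∈ primeFactors a, Φ p = 0 := by
  obtain ⟨u, hu⟩ := prod_normalizedFactors ha
  rw [← hu, map_mul, mul_eq_zero, or_iff_left (u.isUnit.map Φ).ne_zero, map_multiset_prod,
    Multiset.prod_eq_zero_iff, Multiset.mem_map] at h
  obtain ⟨p, hp, hp0⟩ := h
  exact ⟨p, mem_primeFactors.mpr hp, hp0⟩

def commonZeros {R L ι : Type*} [CommRing R] [CommRing L] (φ : R →+* L) (f : ι → R[X]) :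
    Set L :=
  {x | ∀ i, ((f i).map φ).eval x = 0}

namespace Polynomial

theorem sum_natDegree_primeFactors_le {R : Type*} [CommRing R] [IsDomain R]
    [NormalizationMonoid R[X]] [UniqueFactorizationMonoid R[X]] {F : R[X]} (hF : F ≠ 0) :
    ∑ π ∈ primeFactors F, π.natDegree ≤ F.natDegree := by
  rw [← natDegree_prod _ _ fun π hπ =>
    (prime_of_normalized_factor π (mem_primeFactors.mp hπ)).ne_zero]
  exact natDegree_le_of_dvd radical_dvd_self hF

theorem card_roots_toFinset_eq_natSepDegree {L : Type*} [Field L] [IsAlgClosed L]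
    [DecidableEq L] (p : L[X]) : p.roots.toFinset.card = p.natSepDegree := by
  rw [natSepDegree_eq_of_isAlgClosed L, aroots_def, Algebra.algebraMap_self, map_id]

section Resultant

variable {R : Type*} [CommRing R]

theorem map_resultant_eq_zero_of_eval_eq_zero {L : Type*} [CommRing L] (φ : R →+* L)
    {u v : R[X]} (h : u.natDegree ≠ 0 ∨ v.natDegree ≠ 0) {x : L}
    (hu : (u.map φ).eval x = 0) (hv : (v.map φ).eval x = 0) : φ (resultant u v) = 0 := by
  obtain ⟨a, b, -, -, e⟩ := exists_mul_add_mul_eq_C_resultant u v le_rfl le_rfl h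
  simpa [hu, hv] using congrArg (fun q => (q.map φ).eval x) e.symm

theorem resultant_ne_zero_of_isCoprime_map {K : Type*} [Field K] (φ : R →+* K)
    (hφ : Function.Injective φ) {u v : R[X]} (h : IsCoprime (u.map φ) (v.map φ)) :
    resultant u v ≠ 0 := by
  have := resultant_ne_zero _ _ h
  rwa [natDegree_map_eq_of_injective hφ, natDegree_map_eq_of_injective hφ, resultant_map_map,
    map_ne_zero_iff _ hφ] at this

end Resultant

section FractionField

variable {R K : Type*} [CommRing R] [IsDomain R] [IsGCDMonoid R] [Field K] [Algebra R K]
  [IsFractionRing R K]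

theorem isCoprime_map_of_irreducible_of_not_dvd {π g : R[X]} (hπ : Irreducible π)
    (h : ¬ π ∣ g) : IsCoprime (π.map (algebraMap R K)) (g.map (algebraMap R K)) := by
  by_cases h0 : π.natDegree = 0
  · have hc : algebraMap R K (π.coeff 0) ≠ 0 := by
      rw [map_ne_zero_iff _ (IsFractionRing.injective R K)]
      exact fun h00 => hπ.ne_zero (by rw [eq_C_of_natDegree_eq_zero h0, h00, C_0])
    rw [eq_C_of_natDegree_eq_zero h0, Polynomial.map_C]
    exact ⟨C (algebraMap R K (π.coeff 0))⁻¹, 0, by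
      rw [zero_mul, add_zero, ← C_mul, inv_mul_cancel₀ hc, C_1]⟩
  have hprim := hπ.isPrimitive h0
  refine ((hprim.irreducible_iff_irreducible_map_fraction_map).mp hπ).coprime_iff_not_dvd.mpr ?_
  rwa [← hprim.dvd_iff_fraction_map_dvd_fraction_map K]

theorem natSepDegree_map_le_of_irreducible {L : Type*} [Field L] (p : ℕ) [ExpChar K p]
    [ExpChar L p] (φ : R →+* L) {π : R[X]} (hπ : Irreducible π) :
    (π.map φ).natSepDegree ≤ (π.map (algebraMap R K)).natSepDegree := by
  by_cases h0 : π.natDegree = 0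
  · rw [natSepDegree_eq_zero _ (Nat.le_zero.mp (natDegree_map_le.trans h0.le))]
    exact Nat.zero_le _
  have hinj : Function.Injective (algebraMap R K) := IsFractionRing.injective R K
  have hirr : Irreducible (π.map (algebraMap R K)) :=
    (hπ.isPrimitive h0).irreducible_iff_irreducible_map_fraction_map.mp hπ
  obtain ⟨g, hg, m, hgπ⟩ := hirr.hasSeparableContraction p
  have hpm : p ^ m ≠ 0 := pow_ne_zero _ (expChar_pos K p).ne'
  set σ := contract (p ^ m) π
  have hσ : σ.map (algebraMap R K) = g := by rw [map_contract hpm, ← hgπ, contract_expand _ hpm]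
  have hπσ : expand R (p ^ m) σ = π := map_injective _ hinj (by rw [map_expand, hσ, hgπ])
  calc (π.map φ).natSepDegree = (σ.map φ).natSepDegree := by
        rw [← hπσ, map_expand, natSepDegree_expand]
    _ ≤ σ.natDegree := (natSepDegree_le_natDegree _).trans natDegree_map_le
    _ = (π.map (algebraMap R K)).natSepDegree := by
        rw [← hgπ, natSepDegree_expand, hg.natSepDegree_eq_natDegree, ← hσ,
          natDegree_map_eq_of_injective hinj]

theorem sum_natSepDegree_le_card_of_commonZeros_subset {Ω ι : Type*} [Field Ω] [IsAlgClosed Ω]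
    [Algebra K Ω] (f : ι → R[X]) {S : Finset R[X]} (hirr : ∀ π ∈ S, Irreducible π)
    (hrel : (S : Set R[X]).Pairwise IsRelPrime) (hdvd : ∀ π ∈ S, ∀ i, π ∣ f i) {Z : Finset Ω}
    (hZ : commonZeros ((algebraMap K Ω).comp (algebraMap R K)) f ⊆ Z) :
    ∑ π ∈ S, (π.map (algebraMap R K)).natSepDegree ≤ Z.card := by
  classical
  set ψ := (algebraMap K Ω).comp (algebraMap R K)
  have hcard : ∀ π : R[X],
      (π.map (algebraMap R K)).natSepDegree = (π.map ψ).roots.toFinset.card := fun π => by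
    rw [card_roots_toFinset_eq_natSepDegree, ← map_map, natSepDegree_map]
  have hdisj : (S : Set R[X]).PairwiseDisjoint fun π => (π.map ψ).roots.toFinset := by
    intro π hπ π' hπ' hne
    have hcop := isCoprime_map_of_irreducible_of_not_dvd (K := K) (hirr π hπ) fun h =>
      (hirr π hπ).not_isUnit (hrel hπ hπ' hne dvd_rfl h)
    refine Finset.disjoint_left.mpr fun x hx hx' => ?_
    rw [Multiset.mem_toFinset, mem_roots', IsRoot.def, ← map_map] at hx hx'
    rcases aeval_ne_zero_of_isCoprime hcop x with h | h <;>
      rw [aeval_def, eval₂_eq_eval_map] at h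
    exacts [h hx.2, h hx'.2]
  rw [Finset.sum_congr rfl fun π _ => hcard π, ← Finset.card_biUnion hdisj]
  refine Finset.card_le_card fun x hx => hZ fun i => ?_
  obtain ⟨π, hπ, hx⟩ := Finset.mem_biUnion.mp hx
  exact eval_eq_zero_of_dvd_of_eval_eq_zero (Polynomial.map_dvd ψ (hdvd π hπ i))
    (mem_roots'.mp (Multiset.mem_toFinset.mp hx)).2

end FractionField

open scoped Classical in
/-- A specialization `φ` with `φ (specializationWeight π g) ≠ 0` keeps the degree of `π`, and
keeps `π` and `g` without common roots unless `π ∣ g`. -/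
noncomputable def specializationWeight {R : Type*} [CommRing R] (π g : R[X]) : R :=
  if π ∣ g then π.leadingCoeff else π.leadingCoeff * resultant π g

section Weight

variable {R : Type*} [CommRing R]

theorem leadingCoeff_dvd_specializationWeight (π g : R[X]) :
    π.leadingCoeff ∣ specializationWeight π g := by
  unfold specializationWeight
  split_ifs
  exacts [dvd_rfl, dvd_mul_right _ _]

theorem specializationWeight_ne_zero [IsDomain R] [IsGCDMonoid R] {π : R[X]}
    (hπ : Irreducible π) (g : R[X]) : specializationWeight π g ≠ 0 := by
  have hlc : π.leadingCoeff ≠ 0 := leadingCoeff_ne_zero.mpr hπ.ne_zero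
  unfold specializationWeight
  split_ifs with h
  · exact hlc
  · exact mul_ne_zero hlc (resultant_ne_zero_of_isCoprime_map _
      (IsFractionRing.injective R (FractionRing R)) (isCoprime_map_of_irreducible_of_not_dvd hπ h))

variable {L : Type*} [CommRing L] (φ : R →+* L) {π g : R[X]}

theorem map_ne_zero_of_map_specializationWeight_ne_zero
    (hw : φ (specializationWeight π g) ≠ 0) : π.map φ ≠ 0 := fun h => hw <| by
  obtain ⟨c, hc⟩ := leadingCoeff_dvd_specializationWeight π g
  rw [hc, map_mul, leadingCoeff, ← coeff_map, h, coeff_zero, zero_mul]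

theorem dvd_of_map_specializationWeight_ne_zero (hw : φ (specializationWeight π g) ≠ 0) {x : L}
    (hπx : (π.map φ).eval x = 0) (hgx : (g.map φ).eval x = 0) : π ∣ g := by
  by_contra h
  have hdeg : π.natDegree ≠ 0 := fun h0 =>
    map_ne_zero_of_map_specializationWeight_ne_zero φ hw <| by
      rw [eq_C_of_natDegree_eq_zero h0, Polynomial.map_C, eval_C] at hπx
      rw [eq_C_of_natDegree_eq_zero h0, Polynomial.map_C, hπx, C_0]
  unfold specializationWeight at hw
  rw [if_neg h, map_mul, map_resultant_eq_zero_of_eval_eq_zero φ (.inl hdeg) hπx hgx,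
    mul_zero] at hw
  exact hw rfl

end Weight

theorem commonZeros_subset_biUnion_roots {R L ι : Type*} [CommRing R] [IsDomain R]
    [NormalizationMonoid R[X]] [UniqueFactorizationMonoid R[X]] [CommRing L] [IsDomain L]
    [DecidableEq L] (φ : R →+* L) (f : ι → R[X]) (j : R[X] → ι)
    (hj : ∀ π, π ∣ f (j π) → ∀ i, π ∣ f i) {i₀ : ι} (hF : f i₀ ≠ 0)
    (hw : φ (∏ π ∈ primeFactors (f i₀), specializationWeight π (f (j π))) ≠ 0)
    {S : Finset R[X]} (hS : ∀ π ∈ primeFactors (f i₀), (∀ i, π ∣ f i) → π ∈ S) :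
    commonZeros φ f ⊆ S.biUnion fun π => (π.map φ).roots.toFinset := by
  intro x hx
  obtain ⟨π, hπ, hπx⟩ :=
    exists_mem_primeFactors_apply_eq_zero ((evalRingHom x).comp (mapRingHom φ)) hF (hx i₀)
  have hwπ : φ (specializationWeight π (f (j π))) ≠ 0 := by
    rw [map_prod, Finset.prod_ne_zero_iff] at hw
    exact hw π hπ
  have hdvd := hj π (dvd_of_map_specializationWeight_ne_zero φ hwπ hπx (hx (j π)))
  exact Finset.mem_biUnion.mpr ⟨π, hS π hπ hdvd, Multiset.mem_toFinset.mpr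
    (mem_roots'.mpr ⟨map_ne_zero_of_map_specializationWeight_ne_zero φ hwπ, hπx⟩)⟩

theorem card_biUnion_roots_map_le {R K L : Type*} [CommRing R] [IsDomain R] [IsGCDMonoid R]
    [Field K] [Algebra R K] [IsFractionRing R K] [Field L] [IsAlgClosed L] [DecidableEq L]
    (p : ℕ) [ExpChar K p] [ExpChar L p] (φ : R →+* L) {S : Finset R[X]}
    (hirr : ∀ π ∈ S, Irreducible π) :
    (S.biUnion fun π => (π.map φ).roots.toFinset).card ≤
      ∑ π ∈ S, (π.map (algebraMap R K)).natSepDegree :=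
  Finset.card_biUnion_le.trans <| Finset.sum_le_sum fun π hπ =>
    (card_roots_toFinset_eq_natSepDegree _).trans_le
      (natSepDegree_map_le_of_irreducible p φ (hirr π hπ))

end Polynomial

section Height

variable {Fq : Type*} [Field Fq]

theorem natDegree_coeff_le_polyHeight (p : Fq[X][X]) (i : ℕ) :
    (p.coeff i).natDegree ≤ polyHeight p := by
  by_cases hi : i ∈ p.support
  · exact Finset.le_sup (f := fun i => (p.coeff i).natDegree) hi
  · simp [notMem_support_iff.mp hi]

theorem polyHeight_eq_natDegree_swap (p : Fq[X][X]) :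
    polyHeight p = (Bivariate.swap p).natDegree := by
  refine le_antisymm (Finset.sup_le fun i _ => ?_)
    (natDegree_le_iff_coeff_eq_zero.mpr fun j hj => ?_)
  · refine natDegree_le_iff_coeff_eq_zero.mpr fun j hj => ?_
    rw [← Bivariate.coeff_coeff_swap, coeff_eq_zero_of_natDegree_lt hj, coeff_zero]
  · ext i
    rw [Bivariate.coeff_coeff_swap, coeff_zero]
    exact coeff_eq_zero_of_natDegree_lt ((natDegree_coeff_le_polyHeight p i).trans_lt hj)

theorem polyHeight_le_of_dvd {p q : Fq[X][X]} (h : p ∣ q) (hq : q ≠ 0) :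
    polyHeight p ≤ polyHeight q := by
  rw [polyHeight_eq_natDegree_swap, polyHeight_eq_natDegree_swap]
  exact natDegree_le_of_dvd (Bivariate.swap.toRingHom.map_dvd h)
    ((map_ne_zero_iff _ Bivariate.swap.injective).mpr hq)

theorem polyHeight_prod {ι : Type*} (s : Finset ι) (p : ι → Fq[X][X]) (hp : ∀ i ∈ s, p i ≠ 0) :
    polyHeight (∏ i ∈ s, p i) = ∑ i ∈ s, polyHeight (p i) := by
  rw [polyHeight_eq_natDegree_swap, map_prod,
    natDegree_prod _ _ fun i hi => (map_ne_zero_iff _ Bivariate.swap.injective).mpr (hp i hi)]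
  simp only [polyHeight_eq_natDegree_swap]

theorem sum_polyHeight_primeFactors_le [NormalizationMonoid Fq[X][X]]
    [UniqueFactorizationMonoid Fq[X][X]] {F : Fq[X][X]} (hF : F ≠ 0) :
    ∑ π ∈ primeFactors F, polyHeight π ≤ polyHeight F := by
  rw [← polyHeight_prod _ _ fun π hπ =>
    (prime_of_normalized_factor π (mem_primeFactors.mp hπ)).ne_zero]
  exact polyHeight_le_of_dvd radical_dvd_self hF

theorem natDegree_resultant_le_polyHeight (u v : Fq[X][X]) (m n : ℕ) :
    (resultant u v m n).natDegree ≤ m * polyHeight v + n * polyHeight u := by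
  classical
  refine (Matrix.natDegree_det_le_sum _
    (Fin.addCases (fun _ => polyHeight v) fun _ => polyHeight u) fun i j => ?_).trans_eq
    (by simp [Fin.sum_univ_add])
  induction j using Fin.addCases <;>
    simp only [sylvester, Matrix.of_apply, Fin.addCases_left, Fin.addCases_right] <;>
    split_ifs <;> simp [natDegree_coeff_le_polyHeight]

theorem natDegree_specializationWeight_le (π g : Fq[X][X]) :
    (specializationWeight π g).natDegree ≤
      (g.natDegree + 1) * polyHeight π + π.natDegree * polyHeight g := by
  have hlc : π.leadingCoeff.natDegree ≤ polyHeight π := natDegree_coeff_le_polyHeight _ _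
  unfold specializationWeight
  split_ifs
  · nlinarith
  · have := natDegree_resultant_le_polyHeight π g π.natDegree g.natDegree
    calc _ ≤ π.leadingCoeff.natDegree + (resultant π g).natDegree := natDegree_mul_le
      _ ≤ _ := by nlinarith

theorem natDegree_prod_specializationWeight_le {D H : ℕ} {S : Finset Fq[X][X]}
    (g : Fq[X][X] → Fq[X][X]) (hS_deg : ∑ π ∈ S, π.natDegree ≤ D)
    (hS_ht : ∑ π ∈ S, polyHeight π ≤ H) (hg_deg : ∀ π ∈ S, (g π).natDegree ≤ D)
    (hg_ht : ∀ π ∈ S, polyHeight (g π) ≤ H) :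
    (∏ π ∈ S, specializationWeight π (g π)).natDegree ≤ (2 * D + 1) * H := by
  calc _ ≤ ∑ π ∈ S, (specializationWeight π (g π)).natDegree := natDegree_prod_le _ _
    _ ≤ ∑ π ∈ S, ((D + 1) * polyHeight π + H * π.natDegree) :=
        Finset.sum_le_sum fun π hπ => (natDegree_specializationWeight_le π (g π)).trans <| by
          rw [mul_comm H]; gcongr; exacts [hg_deg π hπ, hg_ht π hπ]
    _ = (D + 1) * ∑ π ∈ S, polyHeight π + H * ∑ π ∈ S, π.natDegree := by
        rw [Finset.sum_add_distrib, Finset.mul_sum, Finset.mul_sum]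
    _ ≤ (D + 1) * H + H * D := by gcongr
    _ = (2 * D + 1) * H := by ring

end Height

theorem specialization_preserves_common_zeros_general
    {Fq : Type*} [Field Fq]
    (s D H N₀ : ℕ)
    (f : Fin s → Polynomial (Polynomial Fq))
    (hdeg : ∀ i, (f i).natDegree ≤ D)
    (hht : ∀ i, polyHeight (f i) ≤ H)
    (hne : ∃ i, f i ≠ 0)
    (hzeros : ∃ Z : Finset (AlgebraicClosure (RatFunc Fq)), Z.card ≤ N₀ ∧
      {x : AlgebraicClosure (RatFunc Fq) |
          ∀ i, ((f i).map
            ((algebraMap (RatFunc Fq) (AlgebraicClosure (RatFunc Fq))).comp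
              (algebraMap (Polynomial Fq) (RatFunc Fq)))).eval x = 0} ⊆ ↑Z) :
    ∃ 𝒯 : Polynomial Fq, 𝒯 ≠ 0 ∧ 𝒯.natDegree ≤ (2 * D + 1) * H ∧
      ∀ τ : AlgebraicClosure Fq, aeval τ 𝒯 ≠ 0 →
        ∃ Z' : Finset (AlgebraicClosure Fq), Z'.card ≤ N₀ ∧
          {x : AlgebraicClosure Fq |
              ∀ i, ((f i).map
                (eval₂RingHom (algebraMap Fq (AlgebraicClosure Fq)) τ)).eval x = 0} ⊆ ↑Z' := by
  classical
  obtain ⟨i₀, hF⟩ := hne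
  obtain ⟨Z, hZcard, hZ⟩ := hzeros
  obtain ⟨p, _⟩ := ExpChar.exists Fq
  have := expChar_of_injective_algebraMap (algebraMap Fq (AlgebraicClosure Fq)).injective p
  -- `j π` is an index with `¬ π ∣ f (j π)` whenever there is one
  choose j hj using fun π : Fq[X][X] => show ∃ j, π ∣ f j → ∀ i, π ∣ f i from
    (em (∀ i, π ∣ f i)).elim (fun h => ⟨i₀, fun _ => h⟩) fun h =>
      (not_forall.mp h).imp fun _ hj h' => absurd h' hj
  set P := primeFactors (f i₀)
  set Pc := P.filter fun π => ∀ i, π ∣ f i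
  have hirr : ∀ π ∈ P, Irreducible π := fun π hπ =>
    (prime_of_normalized_factor π (mem_primeFactors.mp hπ)).irreducible
  have hirrc : ∀ π ∈ Pc, Irreducible π := fun π hπ => hirr π (Finset.mem_filter.mp hπ).1
  have hgeneric : ∑ π ∈ Pc, (π.map (algebraMap Fq[X] (RatFunc Fq))).natSepDegree ≤ N₀ :=
    (sum_natSepDegree_le_card_of_commonZeros_subset f hirrc
      (pairwise_primeFactors_isRelPrime.mono (Finset.filter_subset _ _))
      (fun π hπ => (Finset.mem_filter.mp hπ).2) hZ).trans hZcard
  refine ⟨∏ π ∈ P, specializationWeight π (f (j π)),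
    Finset.prod_ne_zero_iff.mpr fun π hπ => specializationWeight_ne_zero (hirr π hπ) _,
    natDegree_prod_specializationWeight_le _ ((sum_natDegree_primeFactors_le hF).trans (hdeg i₀))
      ((sum_polyHeight_primeFactors_le hF).trans (hht i₀)) (fun _ _ => hdeg _) (fun _ _ => hht _),
    fun τ hτ => ⟨Pc.biUnion _, (card_biUnion_roots_map_le p _ hirrc).trans hgeneric,
      commonZeros_subset_biUnion_roots _ f j hj hF hτ fun π hπ h => Finset.mem_filter.mpr ⟨hπ, h⟩⟩⟩

/-- Preserving the number of common zeros under specializations `t ↦ τ`: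
if `f 1, ..., f s ∈ F_q[t][x]` (not all zero) have degrees at most `D`, heights at most `H`,
and at most `N₀` common zeros in the algebraic closure of `F_q(t)`, then there is a nonzero
`𝒯 ∈ F_q[t]` of degree at most `(2D+1)H` such that whenever `𝒯(τ) ≠ 0`, the specialized
polynomials have at most `N₀` common zeros in the algebraic closure of `F_q`. -/
theorem specialization_preserves_common_zeros
    {Fq : Type*} [Field Fq] [Fintype Fq]
    (s D H N₀ : ℕ) (hs : 2 ≤ s)
    (f : Fin s → Polynomial (Polynomial Fq))
    (hdeg : ∀ i, (f i).natDegree ≤ D)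
    (hht : ∀ i, polyHeight (f i) ≤ H)
    (hne : ∃ i, f i ≠ 0)
    (hzeros : ∃ Z : Finset (AlgebraicClosure (RatFunc Fq)), Z.card ≤ N₀ ∧
      {x : AlgebraicClosure (RatFunc Fq) |
          ∀ i, ((f i).map
            ((algebraMap (RatFunc Fq) (AlgebraicClosure (RatFunc Fq))).comp
              (algebraMap (Polynomial Fq) (RatFunc Fq)))).eval x = 0} ⊆ ↑Z) :
    ∃ 𝒯 : Polynomial Fq, 𝒯 ≠ 0 ∧ 𝒯.natDegree ≤ (2 * D + 1) * H ∧
      ∀ τ : AlgebraicClosure Fq, aeval τ 𝒯 ≠ 0 →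
        ∃ Z' : Finset (AlgebraicClosure Fq), Z'.card ≤ N₀ ∧
          {x : AlgebraicClosure Fq |
              ∀ i, ((f i).map
                (eval₂RingHom (algebraMap Fq (AlgebraicClosure Fq)) τ)).eval x = 0} ⊆ ↑Z' :=
  specialization_preserves_common_zeros_general s D H N₀ f hdeg hht hne hzeros
end

section
/- Let q be a power of a prime, let r ≥ 2 be an integer, let K = F_q(t), let a ∈ K be nonzero, and let P(T) ∈ F_q[T] be a non-constant polynomial. Then the map z ↦ Φ^{(z)}_{P(T)}(a) is a polynomial in K[z] of degree q^{r(deg_T(P) − 1)}. -/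
/-! The `z`-degree of `φ(x) = t·x + z·x^q + x^{q^r}` is dominated by `x^{q^r}` as soon as
`x` is non-constant and `r ≥ 2`, so `φ` multiplies degrees by `q^r`. Starting from the
constant `a`, the iterates `φ^{∘i}(a)` therefore have strictly increasing degrees
`0, 1, q^r, q^{2r}, …`, and the term of `Φ_P(a)` coming from the leading coefficient of `P`
dominates. -/

open Polynomial

/-- The additive polynomial map `φ(x) = t·x + λ·x^q + x^{q^r}` defining the Drinfeld module. -/
noncomputable def drinfeldPhi (q r : ℕ) {L : Type*} [Field L] (t lam : L) (x : L) : L :=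
  t * x + lam * x ^ q + x ^ q ^ r

/-- The action `Φ^{(t,λ)}_{P(T)}(c) = Σ_i P_i · φ^{∘i}(c)` of `P(T) ∈ F_q[T]`
on a point `c` of a field `L`, where `ι : F_q →+* L`. -/
noncomputable def drinfeldAct (q r : ℕ) {Fq L : Type*} [Field Fq] [Field L]
    (ι : Fq →+* L) (t lam : L) (P : Polynomial Fq) (c : L) : L :=
  ∑ i ∈ Finset.range (P.natDegree + 1), ι (P.coeff i) * (drinfeldPhi q r t lam)^[i] c

/-- The map `x ↦ t·x + z·x^q + x^{q^r}` on `K[z]`, where `K = F_q(t)` and the parameter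
`z` is the polynomial variable. -/
noncomputable def drinfeldPolyPhi (q r : ℕ) {Fq : Type*} [Field Fq]
    (x : Polynomial (RatFunc Fq)) : Polynomial (RatFunc Fq) :=
  C RatFunc.X * x + X * x ^ q + x ^ q ^ r

/-- `Φ^{(z)}_{P(T)}(a)` viewed as a polynomial in the parameter `z`, with coefficients
in `K = F_q(t)`. -/
noncomputable def drinfeldPolyAct (q r : ℕ) {Fq : Type*} [Field Fq]
    (P : Polynomial Fq) (a : RatFunc Fq) : Polynomial (RatFunc Fq) :=
  ∑ i ∈ Finset.range (P.natDegree + 1),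
    C (algebraMap Fq (RatFunc Fq) (P.coeff i)) * (drinfeldPolyPhi q r)^[i] (C a)

open Finset

theorem natDegree_sum_range_C_mul_of_strictMono {S : Type*} [Semiring S] [NoZeroDivisors S]
    (c : ℕ → S) (g : ℕ → S[X]) (hg : StrictMono fun i => (g i).natDegree) (n : ℕ)
    (hc : c n ≠ 0) :
    (∑ i ∈ range (n + 1), C (c i) * g i).natDegree = (g n).natDegree := by
  have hterm : ∀ i, C (c i) * g i ≠ 0 → (C (c i) * g i).natDegree = (g i).natDegree :=
    fun i hi => natDegree_C_mul fun h => hi (by simp [h])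
  rw [natDegree_sum_eq_of_disjoint]
  · refine le_antisymm (Finset.sup_le fun i hi => ?_) ?_
    · exact (natDegree_C_mul_le _ _).trans
        (hg.monotone (Nat.lt_succ_iff.mp (mem_range.mp hi)))
    · exact (natDegree_C_mul hc).ge.trans (le_sup (f := fun i => (C (c i) * g i).natDegree)
        (self_mem_range_succ n))
  · rintro i ⟨-, hi⟩ j ⟨-, hj⟩ hij
    simpa [Function.onFun, hterm i hi, hterm j hj] using hg.injective.ne hij

section DrinfeldPoly

variable {Fq : Type*} [Field Fq] {q r : ℕ}

theorem eval_drinfeldPolyPhi (z : RatFunc Fq) (x : (RatFunc Fq)[X]) :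
    (drinfeldPolyPhi q r x).eval z = drinfeldPhi q r RatFunc.X z (x.eval z) := by
  simp [drinfeldPolyPhi, drinfeldPhi]

theorem eval_iterate_drinfeldPolyPhi (z : RatFunc Fq) (i : ℕ) (x : (RatFunc Fq)[X]) :
    ((drinfeldPolyPhi q r)^[i] x).eval z = (drinfeldPhi q r RatFunc.X z)^[i] (x.eval z) :=
  (Function.Semiconj.iterate_right (f := eval z) (eval_drinfeldPolyPhi z) i) x

theorem eval_drinfeldPolyAct (P : Fq[X]) (a z : RatFunc Fq) :
    (drinfeldPolyAct q r P a).eval z =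
      drinfeldAct q r (algebraMap Fq (RatFunc Fq)) RatFunc.X z P a := by
  simp [drinfeldPolyAct, drinfeldAct, eval_finsetSum, eval_iterate_drinfeldPolyPhi]

theorem natDegree_drinfeldPolyPhi_C {a : RatFunc Fq} (ha : a ≠ 0) :
    (drinfeldPolyPhi q r (C a)).natDegree = 1 := by
  have hlin : drinfeldPolyPhi q r (C a) = C (a ^ q) * X + C (RatFunc.X * a + a ^ q ^ r) := by
    simp only [drinfeldPolyPhi, C_add, C_mul, C_pow]
    ring
  rw [hlin, natDegree_linear (pow_ne_zero _ ha)]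

theorem natDegree_drinfeldPolyPhi (hq : 1 < q) (hr : 2 ≤ r) {p : (RatFunc Fq)[X]}
    (hp : 0 < p.natDegree) :
    (drinfeldPolyPhi q r p).natDegree = q ^ r * p.natDegree := by
  have hlow : (C RatFunc.X * p + X * p ^ q).natDegree ≤ 1 + q * p.natDegree := by
    refine natDegree_add_le_of_degree_le ((natDegree_C_mul_le _ _).trans ?_) ?_
    · nlinarith
    · exact natDegree_mul_le.trans (add_le_add natDegree_X_le natDegree_pow_le)
  have hdom : 1 + q * p.natDegree < q ^ r * p.natDegree := by
    have : q * q ≤ q ^ r := by simpa [sq] using Nat.pow_le_pow_right (by omega) hr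
    nlinarith
  rw [drinfeldPolyPhi, natDegree_add_eq_right_of_natDegree_lt (by rw [natDegree_pow]; omega),
    natDegree_pow]

theorem natDegree_iterate_succ_drinfeldPolyPhi_C (hq : 1 < q) (hr : 2 ≤ r) {a : RatFunc Fq}
    (ha : a ≠ 0) (i : ℕ) :
    ((drinfeldPolyPhi q r)^[i + 1] (C a)).natDegree = q ^ (r * i) := by
  induction i with
  | zero => simpa using natDegree_drinfeldPolyPhi_C ha
  | succ i ih =>
    rw [Function.iterate_succ_apply', natDegree_drinfeldPolyPhi hq hr (ih ▸ by positivity), ih,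
      ← pow_add, mul_add_one, add_comm]

theorem strictMono_natDegree_iterate_drinfeldPolyPhi_C (hq : 1 < q) (hr : 2 ≤ r)
    {a : RatFunc Fq} (ha : a ≠ 0) :
    StrictMono fun i => ((drinfeldPolyPhi q r)^[i] (C a)).natDegree := by
  refine strictMono_nat_of_lt_succ fun i => ?_
  rcases i with _ | i
  · simp [natDegree_drinfeldPolyPhi_C ha]
  · simp only [natDegree_iterate_succ_drinfeldPolyPhi_C hq hr ha]
    exact Nat.pow_lt_pow_right hq (Nat.mul_lt_mul_of_pos_left i.lt_succ_self (by omega))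

theorem natDegree_drinfeldPolyAct (hq : 1 < q) (hr : 2 ≤ r) {a : RatFunc Fq} (ha : a ≠ 0)
    {P : Fq[X]} (hP : P.natDegree ≠ 0) :
    (drinfeldPolyAct q r P a).natDegree = q ^ (r * (P.natDegree - 1)) := by
  have hlead : algebraMap Fq (RatFunc Fq) (P.coeff P.natDegree) ≠ 0 :=
    (_root_.map_ne_zero _).mpr <|
      leadingCoeff_ne_zero.mpr (ne_zero_of_natDegree_gt (Nat.pos_of_ne_zero hP))
  obtain ⟨n, hn⟩ := Nat.exists_eq_add_one_of_ne_zero hP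
  rw [drinfeldPolyAct, natDegree_sum_range_C_mul_of_strictMono _ _
    (strictMono_natDegree_iterate_drinfeldPolyPhi_C hq hr ha) _ hlead, hn,
    natDegree_iterate_succ_drinfeldPolyPhi_C hq hr ha, Nat.add_sub_cancel]

end DrinfeldPoly

/-- For nonzero `a ∈ K = F_q(t)` and non-constant `P(T) ∈ F_q[T]`, the map
`z ↦ Φ^{(z)}_{P(T)}(a)` is a polynomial in `K[z]` of degree `q^{r(deg_T(P) − 1)}`. -/
theorem drinfeld_poly_act_degree
    {Fq : Type*} [Field Fq] [Fintype Fq] (q r : ℕ)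
    (hq : Fintype.card Fq = q) (hr : 2 ≤ r)
    (a : RatFunc Fq) (ha : a ≠ 0)
    (P : Polynomial Fq) (hP : P.natDegree ≠ 0) :
    (∀ z : RatFunc Fq, (drinfeldPolyAct q r P a).eval z =
        drinfeldAct q r (algebraMap Fq (RatFunc Fq)) RatFunc.X z P a) ∧
      (drinfeldPolyAct q r P a).natDegree = q ^ (r * (P.natDegree - 1)) :=
  ⟨eval_drinfeldPolyAct P a, natDegree_drinfeldPolyAct (hq ▸ Fintype.one_lt_card) hr ha hP⟩
end
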